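/- arXiv:0712.3878 — 2 statements merged into one kernel-verified Lean document; each statement's English description precedes it below -/
import Mathlib

section
/- Let Y₁ and Y₂ be two distinct irreducible closed subvarieties of ℙⁿ of codimension at least 2, and let Y be a third irreducible closed subvariety of codimension at least 2. If Z is an irreducible component of Y₁ ∩ Y₂ (so that Δ(Z) is an intersection component of the join J(Y₁,Y₂) = Δ(Y₁) ∩ Δ(Y₂)) and Δ(Z) ⊆ Δ(Y), then Z ⊆ Y. -/
/-!
Common framework: projective space over a field `K` with its Zariski topology,
lines, the Grassmannian `𝔾(1,n)` of lines (with the quotient Zariski topology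
coming from the Stiefel-style parametrization by pairs of independent vectors),
the incidence variety `Δ(X)`, dimension of a subvariety as the topological Krull
dimension of the corresponding subspace, irreducible components, dense open
subsets, embedded projective tangent spaces, joins and (tri)secant varieties.
-/

open MvPolynomial
open scoped LinearAlgebra.Projectivization

noncomputable section

variable (K : Type) [Field K]

/-- Projective `n`-space over `K`, with homogeneous coordinates indexed by `Fin (n+1)`. -/
abbrev Pn (n : ℕ) := ℙ K (Fin (n + 1) → K)

/-- The Zariski topology on `ℙⁿ`: generated by the basic open sets `D(f)` of
nonvanishing of homogeneous polynomials (nonvanishing of a homogeneous polynomial is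
independent of the chosen representative). -/
instance projZariski (n : ℕ) : TopologicalSpace (Pn K n) :=
  TopologicalSpace.generateFrom
    {U | ∃ (f : MvPolynomial (Fin (n + 1)) K) (d : ℕ), f.IsHomogeneous d ∧
      U = {x : Pn K n | eval x.rep f ≠ 0}}

/-- The projective linear subspace of `ℙⁿ` associated to a linear subspace `W ⊆ K^{n+1}`
(a `k`-dimensional projective linear subspace corresponds to `finrank W = k + 1`). -/
def projLinear {n : ℕ} (W : Submodule K (Fin (n + 1) → K)) : Set (Pn K n) :=
  {x | x.rep ∈ W}

/-- `l ⊆ ℙⁿ` is a (projective) line. -/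
def IsLine {n : ℕ} (l : Set (Pn K n)) : Prop :=
  ∃ W : Submodule K (Fin (n + 1) → K), Module.finrank K W = 2 ∧ l = projLinear K W

/-- The Grassmannian `𝔾(1,n)` of lines in `ℙⁿ`. -/
def Grass (n : ℕ) := {l : Set (Pn K n) // IsLine K l}

/-- Pairs of linearly independent vectors of `K^{n+1}` (parametrizing lines of `ℙⁿ`),
with the Zariski topology. -/
def Stiefel2 (n : ℕ) := {vw : Fin 2 → Fin (n + 1) → K // LinearIndependent K vw}

/-- The affine Zariski topology on the space of pairs of vectors. -/
def affZariski2 (n : ℕ) : TopologicalSpace (Fin 2 → Fin (n + 1) → K) :=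
  TopologicalSpace.generateFrom
    {U | ∃ f : MvPolynomial (Fin 2 × Fin (n + 1)) K,
      U = {v | eval (fun p => v p.1 p.2) f ≠ 0}}

instance (n : ℕ) : TopologicalSpace (Stiefel2 K n) :=
  letI := affZariski2 K n
  inferInstanceAs (TopologicalSpace {vw : Fin 2 → Fin (n + 1) → K // LinearIndependent K vw})

/-- The line of `ℙⁿ` spanned by a pair of independent vectors. -/
def lineOf {n : ℕ} (vw : Stiefel2 K n) : Grass K n :=
  ⟨projLinear K (Submodule.span K (Set.range vw.1)),
    Submodule.span K (Set.range vw.1), by rw [finrank_span_eq_card vw.2]; simp, rfl⟩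

/-- The Zariski topology on the Grassmannian of lines: the quotient topology induced by the
parametrization by pairs of independent vectors. -/
instance (n : ℕ) : TopologicalSpace (Grass K n) :=
  TopologicalSpace.coinduced (lineOf K (n := n)) inferInstance

/-- `Δ(X)`: the variety of lines incident to `X`. -/
def Delta {n : ℕ} (X : Set (Pn K n)) : Set (Grass K n) :=
  {l | (l.1 ∩ X).Nonempty}

/-- The dimension of a subvariety `S` of a (Zariski-topologized) space: the topological
Krull dimension of `S` with the subspace topology (sup of lengths of chains of irreducible
closed subsets). -/
def sdim {α : Type*} [TopologicalSpace α] (S : Set α) : WithBot ℕ∞ :=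
  topologicalKrullDim S

/-- `C` is an irreducible component of `S`: a maximal irreducible closed subset of `S`. -/
def IsIrredCompOf {α : Type*} [TopologicalSpace α] (C S : Set α) : Prop :=
  C ⊆ S ∧ IsIrreducible C ∧ IsClosed C ∧
    ∀ C' : Set α, C ⊆ C' → C' ⊆ S → IsIrreducible C' → IsClosed C' → C' = C

/-- `U` is a dense open subset of `X` (open in the subspace topology of `X`, dense in `X`). -/
def IsDenseOpenIn {α : Type*} [TopologicalSpace α] (U X : Set α) : Prop :=
  U ⊆ X ∧ (∃ V : Set α, IsOpen V ∧ U = X ∩ V) ∧ X ⊆ closure U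

/-- The embedded projective tangent space of `X ⊆ ℙⁿ` at `p`: the zero locus of the
differentials at `p` of all homogeneous polynomials vanishing on `X`. -/
def tangentSpace {n : ℕ} (X : Set (Pn K n)) (p : Pn K n) : Set (Pn K n) :=
  {y | ∀ (f : MvPolynomial (Fin (n + 1)) K) (d : ℕ), f.IsHomogeneous d →
    (∀ x ∈ X, eval x.rep f = 0) →
    (∑ i, eval p.rep (pderiv i f) * y.rep i) = 0}

/-- The line of `ℙⁿ` through two (distinct) points. -/
def lineThrough {n : ℕ} (p q : Pn K n) : Set (Pn K n) :=
  projLinear K (Submodule.span K {p.rep, q.rep})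

/-- The set of lines spanned by pairs of distinct points `(p,q) ∈ Y₁ × Y₂`. -/
def joinLines {n : ℕ} (Y₁ Y₂ : Set (Pn K n)) : Set (Grass K n) :=
  {l | ∃ p ∈ Y₁, ∃ q ∈ Y₂, p ≠ q ∧ p ∈ l.1 ∧ q ∈ l.1}

/-- The joining component of the join `J(Y₁,Y₂)`: the closure in `𝔾(1,n)` of the set of
lines spanned by pairs of distinct points of `Y₁ × Y₂`. -/
def joiningComponent {n : ℕ} (Y₁ Y₂ : Set (Pn K n)) : Set (Grass K n) :=
  closure (joinLines K Y₁ Y₂)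

/-- The union of the lines belonging to a family `S ⊆ 𝔾(1,n)`. -/
def linesUnion {n : ℕ} (S : Set (Grass K n)) : Set (Pn K n) :=
  ⋃ l ∈ S, l.1

/-- `V₁,₃(Z)`: the variety of trisecant lines of `Z`, the closure in `𝔾(1,n)` of the set of
lines meeting `Z` in (at least) three pairwise distinct points. -/
def trisecants {n : ℕ} (Z : Set (Pn K n)) : Set (Grass K n) :=
  closure {l | ∃ p ∈ Z, ∃ q ∈ Z, ∃ s ∈ Z,
    p ≠ q ∧ p ≠ s ∧ q ≠ s ∧ p ∈ l.1 ∧ q ∈ l.1 ∧ s ∈ l.1}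

/-- `V₁,₃(Y,Z)`: the closure in `𝔾(1,n)` of the set of lines through a point of `Y` and two
distinct points of `Z \ Y`. -/
def trisecantsRel {n : ℕ} (Y Z : Set (Pn K n)) : Set (Grass K n) :=
  closure {l | ∃ p ∈ Y, ∃ q₁ ∈ Z \ Y, ∃ q₂ ∈ Z \ Y,
    q₁ ≠ q₂ ∧ p ∈ l.1 ∧ q₁ ∈ l.1 ∧ q₂ ∈ l.1}

/-- `Z` has degree at least 3: some line meets `Z` in at least three (isolated) points,
i.e. the (finite) intersection with some line has at least `3` points. -/
def degreeGE3 {n : ℕ} (Z : Set (Pn K n)) : Prop :=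
  ∃ l : Grass K n, (l.1 ∩ Z).Finite ∧ 3 ≤ (l.1 ∩ Z).ncard

end

/-!
Suppose `p ∈ Z \ Y`. Every line through `p` meets `Z`, hence meets `Y`: all of `ℙⁿ` is the cone
over `Y` with vertex `p`. Cones over closed sets are closed, by elimination: given `x₀` off the
cone, take a form `f` vanishing on `Y` with `f p ≠ 0` and a form `G` vanishing on `Y` but not at
the finitely many zeros of `f` on the line `p x₀`; the resultant of `f` and `G` restricted to the
line through `p` and a variable point `x` vanishes on the cone but not at `x₀`. As linear spaces are irreducible, some
irreducible closed `Y' ⊆ Y` already has `ℙⁿ` as its cone; cutting `Y'` by a hyperplane through `p`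
missing a point of `Y'` and inducting on the dimension yields a chain of `n` irreducible closed
subsets of `Y`, so `dim Y ≥ n - 1`, against the codimension bound. For `n ≤ 1` the bound makes
`Y₁` and `Y₂` points, and distinct points do not meet.
-/

theorem MvPolynomial.IsHomogeneous.eval_smul {R σ : Type*} [CommSemiring R]
    {f : MvPolynomial σ R} {d : ℕ} (hf : f.IsHomogeneous d) (c : R) (v : σ → R) :
    eval (c • v) f = c ^ d * eval v f := by
  rw [eval_eq, eval_eq, Finset.mul_sum]
  refine Finset.sum_congr rfl fun m hm => ?_
  have hdeg : m.degree = d := by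
    rw [Finsupp.degree_eq_weight_one]; exact hf (mem_support_iff.mp hm)
  simp_rw [Pi.smul_apply, smul_eq_mul, mul_pow, Finset.prod_mul_distrib,
    Finset.prod_pow_eq_pow_sum]
  rw [show ∑ i ∈ m.support, m i = m.degree from rfl, hdeg]
  ring

theorem MvPolynomial.eval_homogeneousComponent_eq_zero_of_eval_smul {K σ : Type*} [Field K]
    [Infinite K] {q : MvPolynomial σ K} {v : σ → K} (h : ∀ c : K, c ≠ 0 → eval (c • v) q = 0)
    (e : ℕ) :
    eval v (homogeneousComponent e q) = 0 := by
  -- `P.eval c = eval (c • v) q`, so `P` has infinitely many roots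
  set P : Polynomial K := ∑ j ∈ Finset.range (q.totalDegree + 1),
    Polynomial.C (eval v (homogeneousComponent j q)) * Polynomial.X ^ j
  have hP : P = 0 := by
    refine Polynomial.eq_zero_of_infinite_isRoot _
      ((Set.finite_singleton (0 : K)).infinite_compl.mono fun c hc => ?_)
    show P.eval c = 0
    rw [← h c hc]
    conv_rhs => rw [← sum_homogeneousComponent q]
    simp only [P, map_sum, Polynomial.eval_finsetSum, Polynomial.eval_mul, Polynomial.eval_C,
      Polynomial.eval_pow, Polynomial.eval_X, (homogeneousComponent_isHomogeneous _ q).eval_smul,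
      mul_comm]
  by_cases he : e ≤ q.totalDegree
  · have := congrArg (Polynomial.coeff · e) hP
    simpa [P, Polynomial.finsetSum_coeff, Polynomial.coeff_X_pow, Nat.lt_succ_iff.mpr he]
      using this
  · rw [homogeneousComponent_eq_zero _ _ (by omega), map_zero]

theorem Projectivization.rep_mem_span_singleton_iff {K V : Type*} [DivisionRing K]
    [AddCommGroup V] [Module K V] {x a : ℙ K V} : x.rep ∈ K ∙ a.rep ↔ x = a := by
  rw [Submodule.mem_span_singleton, ← mk_eq_mk_iff' K _ _ x.rep_nonzero a.rep_nonzero,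
    mk_rep, mk_rep]

namespace Polynomial

variable {R ι : Type*} [CommSemiring R]

theorem natDegree_prod_pow_le_and_coeff_of_natDegree_le_one (s : Finset ι) (L : ι → R[X])
    (e : ι → ℕ) (hL : ∀ i ∈ s, (L i).natDegree ≤ 1) :
    (∏ i ∈ s, L i ^ e i).natDegree ≤ ∑ i ∈ s, e i ∧
      (∏ i ∈ s, L i ^ e i).coeff (∑ i ∈ s, e i) = ∏ i ∈ s, (L i).coeff 1 ^ e i := by
  classical
  induction s using Finset.induction_on with
  | empty => simp
  | insert i s hi ih =>
    obtain ⟨hdeg, hcoeff⟩ := ih fun j hj => hL j (Finset.mem_insert_of_mem hj)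
    have hLi : (L i ^ e i).natDegree ≤ e i * 1 :=
      natDegree_pow_le.trans (Nat.mul_le_mul_left _ (hL i (Finset.mem_insert_self i s)))
    rw [mul_one] at hLi
    rw [Finset.prod_insert hi, Finset.prod_insert hi, Finset.sum_insert hi]
    refine ⟨natDegree_mul_le.trans (add_le_add hLi hdeg), ?_⟩
    rw [coeff_mul_add_eq_of_natDegree_le hLi hdeg, hcoeff,
      ← coeff_pow_of_natDegree_le (hL i (Finset.mem_insert_self i s)), mul_one]

end Polynomial

namespace MvPolynomial

variable {R S σ : Type*} [CommRing R] [CommRing S] [Algebra R S]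

noncomputable def restrictLine (x p : σ → S) (f : MvPolynomial σ R) : Polynomial S :=
  aeval (fun i => Polynomial.C (x i) + Polynomial.C (p i) * Polynomial.X) f

theorem eval_restrictLine (x p : σ → R) (f : MvPolynomial σ R) (t : R) :
    (restrictLine x p f).eval t = eval (x + t • p) f := by
  rw [restrictLine, ← Polynomial.coe_aeval_eq_eval, ← AlgHom.comp_apply, comp_aeval,
    ← aeval_eq_eval]
  congr 2
  funext i
  simp only [map_add, map_mul, Polynomial.aeval_C, Polynomial.aeval_X, Pi.add_apply,
    Pi.smul_apply, smul_eq_mul, Algebra.algebraMap_self, RingHom.id_apply]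
  ring

theorem map_restrictLine {T : Type*} [CommRing T] [Algebra R T] (φ : S →ₐ[R] T)
    (x p : σ → S) (f : MvPolynomial σ R) :
    (restrictLine x p f).map (φ : S →+* T) = restrictLine (φ ∘ x) (φ ∘ p) f := by
  rw [restrictLine, restrictLine, ← Polynomial.coe_mapAlgHom, ← AlgHom.comp_apply, comp_aeval]
  simp

theorem restrictLine_monomial (x p : σ → S) (m : σ →₀ ℕ) (c : R) :
    restrictLine x p (monomial m c) = Polynomial.C (algebraMap R S c) *
      ∏ i ∈ m.support, (Polynomial.C (x i) + Polynomial.C (p i) * Polynomial.X) ^ m i := by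
  rw [restrictLine, aeval_monomial, Polynomial.algebraMap_apply, Finsupp.prod]

theorem IsHomogeneous.natDegree_restrictLine_le_and_coeff {f : MvPolynomial σ R} {d : ℕ}
    (hf : f.IsHomogeneous d) (x p : σ → S) :
    (restrictLine x p f).natDegree ≤ d ∧
      (restrictLine x p f).coeff d = MvPolynomial.aeval p f := by
  have hL : ∀ i, (Polynomial.C (x i) + Polynomial.C (p i) * Polynomial.X).natDegree ≤ 1 :=
    fun i => by compute_degree
  have hmon : ∀ m ∈ f.support, (restrictLine x p (monomial m (coeff m f))).natDegree ≤ d ∧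
      (restrictLine x p (monomial m (coeff m f))).coeff d =
        MvPolynomial.aeval p (monomial m (coeff m f)) := by
    intro m hm
    have hdeg : ∑ i ∈ m.support, m i = d := by
      change m.degree = d
      rw [Finsupp.degree_eq_weight_one]; exact hf (mem_support_iff.mp hm)
    obtain ⟨h1, h2⟩ := Polynomial.natDegree_prod_pow_le_and_coeff_of_natDegree_le_one m.support
      _ m fun i _ => hL i
    rw [hdeg] at h1 h2
    rw [restrictLine_monomial, aeval_monomial, Finsupp.prod]
    refine ⟨Polynomial.natDegree_C_mul_le _ _ |>.trans h1, ?_⟩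
    rw [Polynomial.coeff_C_mul, h2]
    simp
  have hsum : restrictLine x p f =
      ∑ m ∈ f.support, restrictLine x p (monomial m (coeff m f)) := by
    conv_lhs => rw [f.as_sum]
    exact map_sum (MvPolynomial.aeval _) _ _
  refine ⟨hsum ▸ Polynomial.natDegree_sum_le_of_forall_le _ _ fun m hm => (hmon m hm).1, ?_⟩
  rw [hsum, Polynomial.finsetSum_coeff, Finset.sum_congr rfl fun m hm => (hmon m hm).2,
    ← map_sum, ← f.as_sum]

end MvPolynomial

theorem MvPolynomial.exists_eval_ne_zero_on_line {K σ : Type*} [Field K] [Infinite K]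
    {g₁ g₂ : MvPolynomial σ K} {u w : σ → K} (hu0 : u ≠ 0) (hu : eval u g₁ ≠ 0)
    (hw : eval w g₂ ≠ 0) :
    ∃ t : K, u + t • (w - u) ≠ 0 ∧ eval (u + t • (w - u)) g₁ ≠ 0 ∧
      eval (u + t • (w - u)) g₂ ≠ 0 := by
  classical
  have hP : restrictLine u (w - u) g₁ * restrictLine u (w - u) g₂ ≠ 0 := by
    refine mul_ne_zero (fun h => hu ?_) (fun h => hw ?_)
    · have h0 := eval_restrictLine u (w - u) g₁ 0
      rwa [h, Polynomial.eval_zero, zero_smul, add_zero, eq_comm] at h0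
    · have h1 := eval_restrictLine u (w - u) g₂ 1
      rwa [h, Polynomial.eval_zero, one_smul, add_sub_cancel, eq_comm] at h1
  have hzero : {t : K | u + t • (w - u) = 0}.Finite := by
    refine Set.Subsingleton.finite fun t ht t' ht' => ?_
    have h := ht.trans ht'.symm
    rw [add_right_inj, ← sub_eq_zero, ← sub_smul, smul_eq_zero, sub_eq_zero, sub_eq_zero] at h
    rcases h with h | h
    · exact h
    · simp [h, hu0] at ht
  obtain ⟨t, ht⟩ := Infinite.exists_notMem_finset
    ((restrictLine u (w - u) g₁ * restrictLine u (w - u) g₂).roots.toFinset ∪ hzero.toFinset)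
  simp only [Finset.mem_union, Multiset.mem_toFinset, Polynomial.mem_roots hP,
    Polynomial.IsRoot.def, Polynomial.eval_mul, Set.Finite.mem_toFinset, Set.mem_ofPred_eq,
    not_or, mul_eq_zero, eval_restrictLine] at ht
  exact ⟨t, ht.2, ht.1.1, ht.1.2⟩

namespace Polynomial

variable {R : Type*} [CommRing R]

theorem resultant_eq_zero_of_isRoot {f g : R[X]} {m n : ℕ} (hf : f.natDegree ≤ m)
    (hg : g.natDegree ≤ n) (hmn : m ≠ 0 ∨ n ≠ 0) {a : R} (hfa : f.IsRoot a) (hga : g.IsRoot a) :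
    resultant f g m n = 0 := by
  obtain ⟨u, v, -, -, h⟩ := exists_mul_add_mul_eq_C_resultant f g hf hg hmn
  simpa [hfa.eq_zero, hga.eq_zero] using (congrArg (eval a) h).symm

theorem resultant_ne_zero_of_natDegree_eq [IsDomain R] {f g : R[X]} {m n : ℕ} (hf0 : f ≠ 0)
    (hf : f.natDegree = m) (hg : g.natDegree ≤ n) (H : IsCoprime f g) :
    resultant f g m n ≠ 0 := by
  obtain ⟨k, rfl⟩ := Nat.exists_eq_add_of_le hg
  rw [resultant_add_right_deg (hg := le_rfl), ← hf, coeff_natDegree]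
  exact mul_ne_zero (pow_ne_zero _ (leadingCoeff_ne_zero.mpr hf0)) (resultant_ne_zero f g H)

end Polynomial

namespace MvPolynomial

theorem eval_resultant_restrictLine {R σ : Type*} [CommRing R] (v p : σ → R)
    (f g : MvPolynomial σ R) (d e : ℕ) :
    eval v (Polynomial.resultant (restrictLine X (fun i => C (p i)) f)
      (restrictLine X (fun i => C (p i)) g) d e) =
      Polynomial.resultant (restrictLine v p f) (restrictLine v p g) d e := by
  have hmap : ∀ h : MvPolynomial σ R,
      (restrictLine X (fun i => C (p i)) h).map (eval v) = restrictLine v p h := fun h => by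
    simpa [Function.comp_def] using map_restrictLine (aeval v) X (fun i => C (p i)) h
  rw [← Polynomial.resultant_map_map, hmap, hmap]

theorem IsHomogeneous.restrictLine_ne_zero {R σ : Type*} [CommRing R] {f : MvPolynomial σ R}
    {d : ℕ} (hf : f.IsHomogeneous d) {x p : σ → R} (hfp : eval p f ≠ 0) :
    restrictLine x p f ≠ 0 := fun h => by
  have := (hf.natDegree_restrictLine_le_and_coeff x p).2
  rw [h, Polynomial.coeff_zero] at this
  exact hfp this.symm

theorem resultant_restrictLine_eq_zero {R σ : Type*} [CommRing R] {f g : MvPolynomial σ R}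
    {d e : ℕ} (hf : f.IsHomogeneous d) (hg : g.IsHomogeneous e) (hd : d ≠ 0) {x p : σ → R}
    {s : R} (hfs : eval (x + s • p) f = 0) (hgs : eval (x + s • p) g = 0) :
    Polynomial.resultant (restrictLine x p f) (restrictLine x p g) d e = 0 :=
  Polynomial.resultant_eq_zero_of_isRoot (hf.natDegree_restrictLine_le_and_coeff x p).1
    (hg.natDegree_restrictLine_le_and_coeff x p).1 (Or.inl hd)
    (by rwa [Polynomial.IsRoot.def, eval_restrictLine])
    (by rwa [Polynomial.IsRoot.def, eval_restrictLine])

theorem resultant_restrictLine_ne_zero {K σ : Type*} [Field K] [IsAlgClosed K]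
    {f g : MvPolynomial σ K} {d e : ℕ} (hf : f.IsHomogeneous d) (hg : g.IsHomogeneous e)
    {x p : σ → K} (hfp : eval p f ≠ 0)
    (hfg : ∀ s : K, eval (x + s • p) f = 0 → eval (x + s • p) g ≠ 0) :
    Polynomial.resultant (restrictLine x p f) (restrictLine x p g) d e ≠ 0 := by
  obtain ⟨hdeg, hcoeff⟩ := hf.natDegree_restrictLine_le_and_coeff x p
  refine Polynomial.resultant_ne_zero_of_natDegree_eq (hf.restrictLine_ne_zero hfp)
    (le_antisymm hdeg (Polynomial.le_natDegree_of_ne_zero (hcoeff ▸ hfp)))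
    (hg.natDegree_restrictLine_le_and_coeff x p).1 ?_
  rw [Polynomial.isCoprime_iff_aeval_ne_zero_of_isAlgClosed (k := K) K]
  intro s
  simp only [Polynomial.coe_aeval_eq_eval, eval_restrictLine]
  by_cases hs : eval (x + s • p) f = 0
  · exact Or.inr (hfg s hs)
  · exact Or.inl hs

end MvPolynomial

theorem le_topologicalKrullDim_of_ltSeries {X : Type*} [TopologicalSpace X] {Y : Set X}
    (s : LTSeries (Set X)) (hs : ∀ C ∈ s, IsIrreducible C ∧ IsClosed C) (hY : s.last ⊆ Y) :
    (s.length : WithBot ℕ∞) ≤ topologicalKrullDim Y := by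
  have hsub : ∀ i, s i ⊆ Y := fun i => (s.monotone (Fin.le_last i)).trans hY
  have hirr : ∀ i, IsIrreducible ((↑) ⁻¹' s i : Set Y) := fun i => by
    have : IrreducibleSpace (s i) := Subtype.irreducibleSpace (hs _ ⟨i, rfl⟩).1
    have hrange : ((↑) ⁻¹' s i : Set Y) = Set.range (Set.inclusion (hsub i)) :=
      (Set.range_inclusion _).symm
    rw [hrange, ← Set.image_univ]
    exact IrreducibleSpace.isIrreducible_univ _ |>.image _
      (continuous_inclusion (hsub i)).continuousOn
  let t : LTSeries (TopologicalSpace.IrreducibleCloseds Y) :=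
    { length := s.length
      toFun := fun i => ⟨(↑) ⁻¹' s i, hirr i,
        (hs _ ⟨i, rfl⟩).2.preimage continuous_subtype_val⟩
      step := fun i => by
        have hstep : s i.castSucc < s i.succ := s.step i
        obtain ⟨x, hx, hxi⟩ := Set.exists_of_ssubset hstep
        show ((↑) ⁻¹' s i.castSucc : Set Y) ⊂ (↑) ⁻¹' s i.succ
        exact ⟨Set.preimage_mono hstep.le,
          fun h => hxi (h (show (⟨x, hsub _ hx⟩ : Y) ∈ (↑) ⁻¹' s i.succ from hx))⟩ }
  exact Order.LTSeries.length_le_krullDim t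

theorem IsIrreducible.subsingleton_of_topologicalKrullDim_le_zero {X : Type*} [TopologicalSpace X]
    [T1Space X] {Y : Set X} (hirr : IsIrreducible Y) (hcl : IsClosed Y)
    (hdim : topologicalKrullDim Y ≤ 0) : Y.Subsingleton := by
  intro a ha b hb
  by_contra hab
  have hlt : ({a} : Set X) < Y :=
    (Set.singleton_subset_iff.mpr ha).ssubset_of_ne fun h => hab (h ▸ hb : b ∈ ({a} : Set X)).symm
  have h1 := le_topologicalKrullDim_of_ltSeries (Y := Y)
    ((RelSeries.singleton _ ({a} : Set X)).snoc Y (by rw [RelSeries.last_singleton]; exact hlt))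
    (fun C hC => by
      rcases RelSeries.mem_snoc.mp hC with ⟨i, rfl⟩ | rfl
      · exact ⟨isIrreducible_singleton, isClosed_singleton⟩
      · exact ⟨hirr, hcl⟩)
    (by simp)
  exact absurd (h1.trans hdim) (by simp)

section ProjectiveSpace

variable {K : Type} [Field K] {n : ℕ}

theorem eval_rep_mk_eq_zero_iff {f : MvPolynomial (Fin (n + 1)) K} {d : ℕ}
    (hf : f.IsHomogeneous d) {v : Fin (n + 1) → K} (hv : v ≠ 0) :
    eval (Projectivization.mk K v hv).rep f = 0 ↔ eval v f = 0 := by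
  obtain ⟨a, ha⟩ := Projectivization.exists_smul_eq_mk_rep K v hv
  rw [← ha, Units.smul_def, hf.eval_smul]
  simp

theorem isOpen_setOf_eval_ne_zero {f : MvPolynomial (Fin (n + 1)) K} {d : ℕ}
    (hf : f.IsHomogeneous d) : IsOpen {x : Pn K n | eval x.rep f ≠ 0} :=
  TopologicalSpace.GenerateOpen.basic _ ⟨f, d, hf, rfl⟩

theorem exists_isHomogeneous_of_isOpen {U : Set (Pn K n)} (hU : IsOpen U) {x : Pn K n}
    (hx : x ∈ U) : ∃ (g : MvPolynomial (Fin (n + 1)) K) (d : ℕ), g.IsHomogeneous d ∧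
      eval x.rep g ≠ 0 ∧ {z : Pn K n | eval z.rep g ≠ 0} ⊆ U := by
  induction hU generalizing x with
  | basic V hV =>
    obtain ⟨f, d, hf, rfl⟩ := hV
    exact ⟨f, d, hf, hx, subset_rfl⟩
  | univ => exact ⟨1, 0, isHomogeneous_one _ _, by simp, Set.subset_univ _⟩
  | inter U V _ _ ihU ihV =>
    obtain ⟨g, d, hg, hgx, hgU⟩ := ihU hx.1
    obtain ⟨h, e, hh, hhx, hhV⟩ := ihV hx.2
    refine ⟨g * h, d + e, hg.mul hh, by simp [hgx, hhx], fun z hz => ?_⟩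
    rw [Set.mem_ofPred_eq, map_mul] at hz
    exact ⟨hgU (left_ne_zero_of_mul hz), hhV (right_ne_zero_of_mul hz)⟩
  | sUnion S _ ih =>
    obtain ⟨t, htS, hxt⟩ := hx
    obtain ⟨g, d, hg, hgx, hgt⟩ := ih t htS hxt
    exact ⟨g, d, hg, hgx, hgt.trans (Set.subset_sUnion_of_mem htS)⟩

theorem exists_isHomogeneous_of_isClosed {F : Set (Pn K n)} (hF : IsClosed F) {x : Pn K n}
    (hx : x ∉ F) : ∃ (g : MvPolynomial (Fin (n + 1)) K) (d : ℕ), g.IsHomogeneous d ∧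
      (∀ z ∈ F, eval z.rep g = 0) ∧ eval x.rep g ≠ 0 := by
  obtain ⟨g, d, hg, hgx, hgF⟩ := exists_isHomogeneous_of_isOpen hF.isOpen_compl hx
  exact ⟨g, d, hg, fun z hz => not_not.mp fun h => hgF h hz, hgx⟩

theorem isClosed_of_forall_exists_isHomogeneous {S : Set (Pn K n)}
    (h : ∀ x ∉ S, ∃ (g : MvPolynomial (Fin (n + 1)) K) (d : ℕ), g.IsHomogeneous d ∧
      (∀ z ∈ S, eval z.rep g = 0) ∧ eval x.rep g ≠ 0) : IsClosed S := by
  rw [← isOpen_compl_iff, isOpen_iff_forall_mem_open]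
  intro x hx
  obtain ⟨g, d, hg, hgS, hgx⟩ := h x hx
  exact ⟨{z | eval z.rep g ≠ 0}, fun z hz hzS => hz (hgS z hzS),
    isOpen_setOf_eval_ne_zero hg, hgx⟩

theorem isClosed_of_forall_exists_eval_smul_eq_zero [Infinite K] {S : Set (Pn K n)}
    (h : ∀ x ∉ S, ∃ q : MvPolynomial (Fin (n + 1)) K,
      (∀ z ∈ S, ∀ c : K, c ≠ 0 → eval (c • z.rep) q = 0) ∧ eval x.rep q ≠ 0) :
    IsClosed S := by
  refine isClosed_of_forall_exists_isHomogeneous fun x hx => ?_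
  obtain ⟨q, hqS, hqx⟩ := h x hx
  obtain ⟨e, he⟩ : ∃ e, eval x.rep (homogeneousComponent e q) ≠ 0 := by
    by_contra! H
    rw [← sum_homogeneousComponent q, map_sum] at hqx
    exact hqx (Finset.sum_eq_zero fun e _ => H e)
  exact ⟨_, e, homogeneousComponent_isHomogeneous e q,
    fun z hz => eval_homogeneousComponent_eq_zero_of_eval_smul (hqS z hz) e, he⟩

theorem isClosed_projLinear (W : Submodule K (Fin (n + 1) → K)) : IsClosed (projLinear K W) := by
  refine isClosed_of_forall_exists_isHomogeneous fun x hx => ?_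
  obtain ⟨φ, hφx, hφW⟩ := W.exists_dual_map_eq_bot_of_notMem hx inferInstance
  have heval : ∀ v, eval v (∑ i, C (φ fun j => if i = j then 1 else 0) * X i) = φ v := fun v => by
    simp [LinearMap.pi_apply_eq_sum_univ φ v, mul_comm]
  refine ⟨∑ i, C (φ fun j => if i = j then 1 else 0) * X i, 1,
    IsHomogeneous.sum _ _ _ fun i _ => (isHomogeneous_X K i).C_mul _, fun z hz => ?_, ?_⟩
  · rw [heval]
    exact (Submodule.eq_bot_iff _).mp hφW _ (Submodule.mem_map_of_mem hz)
  · rwa [heval]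

instance : T1Space (Pn K n) := by
  refine ⟨fun a => ?_⟩
  convert isClosed_projLinear (K ∙ a.rep)
  ext x
  exact Projectivization.rep_mem_span_singleton_iff.symm

noncomputable def homogeneousVanishingIdeal (F : Set (Pn K n)) :
    Ideal (MvPolynomial (Fin (n + 1)) K) :=
  Ideal.span {f | (∃ d, f.IsHomogeneous d) ∧ ∀ z ∈ F, eval z.rep f = 0}

theorem homogeneousVanishingIdeal_strictAnti :
    StrictAnti fun F : TopologicalSpace.Closeds (Pn K n) =>
      homogeneousVanishingIdeal (F : Set (Pn K n)) := by
  intro F G hFG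
  refine lt_of_le_of_ne (Ideal.span_mono fun g hg => ⟨hg.1, fun z hz => hg.2 z (hFG.le hz)⟩) ?_
  obtain ⟨x, hxG, hxF⟩ := Set.exists_of_ssubset hFG
  obtain ⟨g, d, hg, hgF, hgx⟩ := exists_isHomogeneous_of_isClosed F.isClosed hxF
  intro heq
  simp only at heq
  have hle : homogeneousVanishingIdeal (G : Set (Pn K n)) ≤ RingHom.ker (eval x.rep) :=
    Ideal.span_le.mpr fun f hf => hf.2 x hxG
  have hgF' : g ∈ homogeneousVanishingIdeal (F : Set (Pn K n)) := Ideal.subset_span ⟨⟨d, hg⟩, hgF⟩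
  rw [heq] at hle
  exact hgx (hle hgF')

instance : TopologicalSpace.NoetherianSpace (Pn K n) :=
  ((TopologicalSpace.noetherianSpace_TFAE (Pn K n)).out 0 1).mpr
    homogeneousVanishingIdeal_strictAnti.wellFoundedLT

theorem mk_mem_projLinear_iff {W : Submodule K (Fin (n + 1) → K)} {v : Fin (n + 1) → K}
    (hv : v ≠ 0) : Projectivization.mk K v hv ∈ projLinear K W ↔ v ∈ W := by
  obtain ⟨a, ha⟩ := Projectivization.exists_smul_eq_mk_rep K v hv
  change (Projectivization.mk K v hv).rep ∈ W ↔ v ∈ W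
  rw [← ha, Units.smul_def, W.smul_mem_iff a.ne_zero]

theorem rep_add_smul_rep_ne_zero {x p : Pn K n} (hxp : x ≠ p) (s : K) :
    x.rep + s • p.rep ≠ 0 := by
  intro h
  refine hxp (Projectivization.rep_mem_span_singleton_iff.mp ?_)
  rw [add_eq_zero_iff_eq_neg, ← neg_smul] at h
  exact h ▸ Submodule.smul_mem _ _ (Submodule.mem_span_singleton_self _)

theorem exists_mem_projLinear_ne {W : Submodule K (Fin (n + 1) → K)}
    (hW : 2 ≤ Module.finrank K W) (p : Pn K n) : ∃ x ∈ projLinear K W, x ≠ p := by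
  obtain ⟨v, hvW, hvp⟩ : ∃ v ∈ W, v ∉ K ∙ p.rep := by
    by_contra! h
    have := (Submodule.finrank_mono h).trans (finrank_span_singleton p.rep_nonzero).le
    omega
  have hv : v ≠ 0 := fun h => hvp (h ▸ Submodule.zero_mem _)
  refine ⟨Projectivization.mk K v hv, (mk_mem_projLinear_iff hv).mpr hvW, fun h => hvp ?_⟩
  obtain ⟨a, ha⟩ := Projectivization.exists_smul_eq_mk_rep K v hv
  have hrep := Projectivization.rep_mem_span_singleton_iff.mpr h
  rw [← ha, Units.smul_def] at hrep
  exact (Submodule.smul_mem_iff _ a.ne_zero).mp hrep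

theorem isIrreducible_projLinear [Infinite K] {W : Submodule K (Fin (n + 1) → K)} (hW : W ≠ ⊥) :
    IsIrreducible (projLinear K W) := by
  obtain ⟨v, hvW, hv⟩ := W.exists_mem_ne_zero_of_ne_bot hW
  refine ⟨⟨_, (mk_mem_projLinear_iff hv).mpr hvW⟩, ?_⟩
  rw [isPreirreducible_iff_isClosed_union_isClosed]
  intro F₁ F₂ hF₁ hF₂ hcover
  by_contra! h
  obtain ⟨z₁, hz₁W, hz₁F⟩ := Set.not_subset.mp h.1
  obtain ⟨z₂, hz₂W, hz₂F⟩ := Set.not_subset.mp h.2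
  obtain ⟨g₁, d₁, hg₁, hg₁F, hg₁z⟩ := exists_isHomogeneous_of_isClosed hF₁ hz₁F
  obtain ⟨g₂, d₂, hg₂, hg₂F, hg₂z⟩ := exists_isHomogeneous_of_isClosed hF₂ hz₂F
  obtain ⟨t, hv0, hv₁, hv₂⟩ := exists_eval_ne_zero_on_line z₁.rep_nonzero hg₁z hg₂z
  have hvW : z₁.rep + t • (z₂.rep - z₁.rep) ∈ W :=
    W.add_mem hz₁W (W.smul_mem t (W.sub_mem hz₂W hz₁W))
  rcases hcover ((mk_mem_projLinear_iff hv0).mpr hvW) with hF | hF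
  · exact hv₁ ((eval_rep_mk_eq_zero_iff hg₁ hv0).mp (hg₁F _ hF))
  · exact hv₂ ((eval_rep_mk_eq_zero_iff hg₂ hv0).mp (hg₂F _ hF))

theorem exists_hyperplane_of_ne {W : Submodule K (Fin (n + 1) → K)} {p y : Pn K n}
    (hp : p ∈ projLinear K W) (hyp : y ≠ p) :
    ∃ W' ≤ W, Module.finrank K W ≤ Module.finrank K W' + 1 ∧ p ∈ projLinear K W' ∧
      y ∉ projLinear K W' := by
  have hy : y.rep ∉ K ∙ p.rep := fun h => hyp (Projectivization.rep_mem_span_singleton_iff.mp h)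
  obtain ⟨φ, hφy, hφp⟩ := Submodule.exists_dual_map_eq_bot_of_notMem hy inferInstance
  have hφp' : φ p.rep = 0 := by
    simpa using (Submodule.eq_bot_iff _).mp hφp _ (Submodule.mem_map_of_mem
      (Submodule.mem_span_singleton_self p.rep))
  refine ⟨W ⊓ LinearMap.ker φ, inf_le_left, ?_, ⟨hp, hφp'⟩, fun h => hφy h.2⟩
  have hsum := Submodule.finrank_sup_add_finrank_inf_eq W (LinearMap.ker φ)
  have hker := Module.Dual.finrank_ker_add_one_of_ne_zero (f := φ) (by rintro rfl; exact hφy rfl)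
  have hsup := Submodule.finrank_le (W ⊔ LinearMap.ker φ)
  omega

theorem eventually_exists_isHomogeneous_of_isClosed {F : Set (Pn K n)} (hF : IsClosed F)
    {x : Pn K n} (hx : x ∉ F) :
    ∀ᶠ D in Filter.atTop, ∃ g : MvPolynomial (Fin (n + 1)) K, g.IsHomogeneous D ∧
      (∀ z ∈ F, eval z.rep g = 0) ∧ eval x.rep g ≠ 0 := by
  obtain ⟨g, d, hg, hgF, hgx⟩ := exists_isHomogeneous_of_isClosed hF hx
  obtain ⟨i, hi⟩ : ∃ i, x.rep i ≠ 0 := Function.ne_iff.mp x.rep_nonzero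
  filter_upwards [Filter.eventually_ge_atTop d] with D hD
  refine ⟨X i ^ (D - d) * g, ?_, fun z hz => by simp [hgF z hz], by simp [hi, hgx]⟩
  simpa [Nat.sub_add_cancel hD] using (isHomogeneous_X_pow i (D - d)).mul hg

noncomputable def formsVanishingOn (F : Set (Pn K n)) (D : ℕ) :
    Submodule K (MvPolynomial (Fin (n + 1)) K) :=
  homogeneousSubmodule (Fin (n + 1)) K D ⊓ ⨅ z ∈ F, LinearMap.ker (aeval z.rep).toLinearMap

theorem mem_formsVanishingOn {F : Set (Pn K n)} {D : ℕ} {g : MvPolynomial (Fin (n + 1)) K} :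
    g ∈ formsVanishingOn F D ↔ g.IsHomogeneous D ∧ ∀ z ∈ F, eval z.rep g = 0 := by
  simp [formsVanishingOn, mem_homogeneousSubmodule, Submodule.mem_iInf]

theorem exists_isHomogeneous_forall_ne_zero [Infinite K] {F B : Set (Pn K n)} (hF : IsClosed F)
    (hB : B.Finite) (hFB : Disjoint F B) :
    ∃ (G : MvPolynomial (Fin (n + 1)) K) (e : ℕ), G.IsHomogeneous e ∧
      (∀ z ∈ F, eval z.rep G = 0) ∧ ∀ b ∈ B, eval b.rep G ≠ 0 := by
  obtain ⟨D, hD⟩ := ((Filter.eventually_all_finite hB).mpr fun b hb =>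
    eventually_exists_isHomogeneous_of_isClosed hF (hFB.notMem_of_mem_right hb)).exists
  by_contra! h
  have : Finite B := hB.to_subtype
  let V := formsVanishingOn F D
  -- otherwise `V` would be a finite union of the proper subspaces `{g | g b = 0}`
  obtain ⟨b, hb⟩ := Subspace.exists_eq_top_of_iUnion_eq_univ
    (p := fun b : B => LinearMap.ker ((aeval b.1.rep).toLinearMap ∘ₗ V.subtype))
    (Set.eq_univ_of_forall fun g => by
      obtain ⟨hgD, hgF⟩ := mem_formsVanishingOn.mp g.2
      obtain ⟨b, hbB, hb⟩ := h g D hgD hgF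
      exact Set.mem_iUnion.mpr ⟨⟨b, hbB⟩, hb⟩)
  obtain ⟨g, hgD, hgF, hgb⟩ := hD b b.2
  have hg : (⟨g, mem_formsVanishingOn.mpr ⟨hgD, hgF⟩⟩ : V) ∈
      LinearMap.ker ((aeval b.1.rep).toLinearMap ∘ₗ V.subtype) := hb ▸ Submodule.mem_top
  exact hgb hg

def cone (p : Pn K n) (A : Set (Pn K n)) : Set (Pn K n) :=
  insert p {x | ∃ y ∈ A, y.rep ∈ Submodule.span K {p.rep, x.rep}}

theorem cone_empty (p : Pn K n) : cone p ∅ = {p} := by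
  simp [cone]

theorem exists_smul_rep_add_smul_eq_of_mem_cone {p z : Pn K n} {A : Set (Pn K n)}
    (hA : A.Nonempty) (hpA : p ∉ A) (hz : z ∈ cone p A) (c : K) :
    ∃ s : K, ∃ a ∈ A, ∃ c' : K, c • z.rep + s • p.rep = c' • a.rep := by
  rcases hz with rfl | ⟨y, hyA, hy⟩
  · obtain ⟨a, ha⟩ := hA
    exact ⟨-c, a, ha, 0, by rw [neg_smul, add_neg_cancel, zero_smul]⟩
  · obtain ⟨α, β, hαβ⟩ := Submodule.mem_span_pair.mp hy
    have hβ : β ≠ 0 := by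
      rintro rfl
      have hyp : y = p := Projectivization.rep_mem_span_singleton_iff.mp
        (Submodule.mem_span_singleton.mpr ⟨α, by simpa using hαβ⟩)
      exact hpA (hyp ▸ hyA)
    refine ⟨c * α / β, y, hyA, c / β, ?_⟩
    rw [← hαβ, smul_add, smul_smul, smul_smul, div_mul_cancel₀ _ hβ, add_comm (c • z.rep)]
    congr 2
    ring

theorem isClosed_cone [IsAlgClosed K] {p : Pn K n} {A : Set (Pn K n)} (hA : IsClosed A)
    (hpA : p ∉ A) : IsClosed (cone p A) := by
  rcases A.eq_empty_or_nonempty with rfl | hAne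
  · rw [cone_empty]
    exact isClosed_singleton
  refine isClosed_of_forall_exists_eval_smul_eq_zero fun x₀ hx₀ => ?_
  have hx₀p : x₀ ≠ p := fun h => hx₀ (Or.inl h)
  obtain ⟨f, d, hf, hfA, hfp⟩ := exists_isHomogeneous_of_isClosed hA hpA
  have hd : d ≠ 0 := by
    rintro rfl
    obtain ⟨a, ha⟩ := hAne
    have h0 : ∀ v, eval v f = eval 0 f := fun v => by
      rw [← zero_smul K v, hf.eval_smul, pow_zero, one_mul]
    exact hfp (by rw [h0, ← h0 a.rep, hfA a ha])
  set B : Set (Pn K n) := (fun s => Projectivization.mk K (x₀.rep + s • p.rep)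
    (rep_add_smul_rep_ne_zero hx₀p s)) '' {s | eval (x₀.rep + s • p.rep) f = 0}
  have hB : B.Finite := by
    refine Set.Finite.image _ ?_
    simpa [Polynomial.IsRoot.def, eval_restrictLine] using
      Polynomial.finite_setOfPred_isRoot (hf.restrictLine_ne_zero (x := x₀.rep) hfp)
  have hAB : Disjoint A B := by
    rw [Set.disjoint_right]
    rintro _ ⟨s, -, rfl⟩ hsA
    refine hx₀ (Or.inr ⟨_, hsA, ?_⟩)
    obtain ⟨a, ha⟩ := Projectivization.exists_smul_eq_mk_rep K _ (rep_add_smul_rep_ne_zero hx₀p s)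
    rw [← ha]
    exact Submodule.smul_mem _ _
      (Submodule.mem_span_pair.mpr ⟨s, 1, by rw [one_smul, add_comm (s • p.rep)]⟩)
  obtain ⟨G, e, hG, hGA, hGB⟩ := exists_isHomogeneous_forall_ne_zero hA hB hAB
  refine ⟨Polynomial.resultant (restrictLine X (fun i => C (p.rep i)) f)
    (restrictLine X (fun i => C (p.rep i)) G) d e, fun z hz c _ => ?_, ?_⟩
  · rw [eval_resultant_restrictLine]
    obtain ⟨s, a, ha, c', hs⟩ := exists_smul_rep_add_smul_eq_of_mem_cone hAne hpA hz c
    exact resultant_restrictLine_eq_zero hf hG hd (by rw [hs, hf.eval_smul, hfA a ha, mul_zero])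
      (by rw [hs, hG.eval_smul, hGA a ha, mul_zero])
  · rw [eval_resultant_restrictLine]
    refine resultant_restrictLine_ne_zero hf hG hfp fun s hs => ?_
    have := hGB _ ⟨s, hs, rfl⟩
    rwa [Ne, eval_rep_mk_eq_zero_iff hG] at this

theorem exists_isIrreducible_projLinear_subset_cone [IsAlgClosed K]
    {W : Submodule K (Fin (n + 1) → K)} (hW : 2 ≤ Module.finrank K W) {p : Pn K n}
    {A : Set (Pn K n)} (hA : IsClosed A) (hpA : p ∉ A) (hcov : projLinear K W ⊆ cone p A) :
    ∃ A' ⊆ A, IsIrreducible A' ∧ IsClosed A' ∧ projLinear K W ⊆ cone p A' := by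
  classical
  obtain ⟨S, hSf, hSc, hSi, rfl⟩ :=
    TopologicalSpace.NoetherianSpace.exists_finite_set_isClosed_irreducible hA
  obtain ⟨x, hxW, hxp⟩ := exists_mem_projLinear_ne hW p
  have hirr := isIrreducible_projLinear (K := K) (W := W) (by
    rintro rfl
    simp at hW)
  obtain ⟨z, hzT, hWz⟩ := isIrreducible_iff_sUnion_isClosed.mp hirr
    (insert {p} (hSf.toFinset.image (cone p)))
    (by
      simp only [Finset.mem_insert, Finset.mem_image, Set.Finite.mem_toFinset]
      rintro z (rfl | ⟨t, htS, rfl⟩)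
      · exact isClosed_singleton
      · exact isClosed_cone (hSc t htS) fun h => hpA ⟨t, htS, h⟩)
    (by
      intro y hy
      rcases hcov hy with rfl | ⟨a, ⟨t, htS, hat⟩, hya⟩
      · exact ⟨{y}, by simp, rfl⟩
      · exact ⟨cone p t, Finset.mem_coe.mpr (Finset.mem_insert_of_mem
          (Finset.mem_image_of_mem _ (hSf.mem_toFinset.mpr htS))), Or.inr ⟨a, hat, hya⟩⟩)
  simp only [Finset.mem_insert, Finset.mem_image, Set.Finite.mem_toFinset] at hzT
  rcases hzT with rfl | ⟨t, htS, rfl⟩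
  · exact absurd (hWz hxW) hxp
  · exact ⟨t, Set.subset_sUnion_of_mem htS, hSi t htS, hSc t htS, hWz⟩

theorem projLinear_subset_cone_inter_projLinear {W W' : Submodule K (Fin (n + 1) → K)}
    (hW' : W' ≤ W) {p : Pn K n} (hp : p ∈ projLinear K W') {A : Set (Pn K n)}
    (hcov : projLinear K W ⊆ cone p A) : projLinear K W' ⊆ cone p (A ∩ projLinear K W') := by
  intro x hx
  rcases hcov (hW' hx) with h | ⟨y, hyA, hy⟩
  · exact Or.inl h
  · refine Or.inr ⟨y, ⟨hyA, ?_⟩, hy⟩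
    exact Submodule.span_le.mpr (Set.insert_subset hp (Set.singleton_subset_iff.mpr hx)) hy

theorem exists_ltSeries_of_projLinear_subset_cone [IsAlgClosed K] (m : ℕ) :
    ∀ {W : Submodule K (Fin (n + 1) → K)}, m + 2 ≤ Module.finrank K W →
    ∀ {p : Pn K n} {A : Set (Pn K n)}, p ∈ projLinear K W → IsClosed A → p ∉ A →
    projLinear K W ⊆ cone p A →
    ∃ s : LTSeries (Set (Pn K n)), s.length = m ∧ (∀ C ∈ s, IsIrreducible C ∧ IsClosed C) ∧
      s.last ⊆ A := by
  induction m with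
  | zero =>
    intro W hW p A _ hA hpA hcov
    obtain ⟨A', hA'A, hirr, hcl, -⟩ :=
      exists_isIrreducible_projLinear_subset_cone (by omega) hA hpA hcov
    refine ⟨RelSeries.singleton _ A', rfl, fun C hC => ?_, hA'A⟩
    obtain ⟨i, rfl⟩ := hC
    exact ⟨hirr, hcl⟩
  | succ m ih =>
    intro W hW p A hp hA hpA hcov
    obtain ⟨A', hA'A, hirr, hcl, hcov'⟩ :=
      exists_isIrreducible_projLinear_subset_cone (by omega) hA hpA hcov
    obtain ⟨y, hy⟩ := hirr.nonempty
    obtain ⟨W', hW'W, hrank, hpW', hyW'⟩ :=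
      exists_hyperplane_of_ne hp fun h => hpA (h ▸ hA'A hy)
    obtain ⟨s, hlen, hs, hlast⟩ := ih (by omega) hpW' (hcl.inter (isClosed_projLinear W'))
      (fun h => hpA (hA'A h.1)) (projLinear_subset_cone_inter_projLinear hW'W hpW' hcov')
    have hlt : s.last < A' :=
      hlast.trans_lt (Set.inter_subset_left.ssubset_of_not_subset fun h => hyW' (h hy).2)
    refine ⟨s.snoc A' hlt, by simp [hlen], fun C hC => ?_, by simpa using hA'A⟩
    rcases RelSeries.mem_snoc.mp hC with hC | rfl
    · exact hs C hC
    · exact ⟨hirr, hcl⟩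

theorem mem_cone_of_delta_subset {Z Y : Set (Pn K n)}
    (hΔ : Delta K Z ⊆ Delta K Y) {p : Pn K n} (hp : p ∈ Z) (x : Pn K n) : x ∈ cone p Y := by
  by_cases hxp : x = p
  · exact Or.inl hxp
  have hline : IsLine K (projLinear K (Submodule.span K {p.rep, x.rep})) := by
    refine ⟨_, ?_, rfl⟩
    have := finrank_span_eq_card (Projectivization.linearIndependent_pair_iff_ne.mpr (Ne.symm hxp))
    rwa [Matrix.range_cons_cons_empty] at this
  obtain ⟨y, hyl, hyY⟩ := hΔ (show (⟨_, hline⟩ : Grass K n) ∈ Delta K Z from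
    ⟨p, Submodule.subset_span (Set.mem_insert _ _), hp⟩)
  exact Or.inr ⟨y, hyY, hyl⟩

end ProjectiveSpace

theorem intersection_component_delta_subset_general
    (K : Type) [Field K] [IsAlgClosed K]
    (n : ℕ) (Y₁ Y₂ Y : Set (Pn K n))
    (h₁cl : IsClosed Y₁) (h₁irr : IsIrreducible Y₁)
    (h₁codim : sdim Y₁ ≤ ((n - 2 : ℕ) : WithBot ℕ∞))
    (h₂cl : IsClosed Y₂) (h₂irr : IsIrreducible Y₂)
    (h₂codim : sdim Y₂ ≤ ((n - 2 : ℕ) : WithBot ℕ∞))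
    (hne : Y₁ ≠ Y₂)
    (hYcl : IsClosed Y)
    (hYcodim : sdim Y ≤ ((n - 2 : ℕ) : WithBot ℕ∞))
    (Z : Set (Pn K n)) (hZ : IsIrredCompOf Z (Y₁ ∩ Y₂))
    (hΔ : Delta K Z ⊆ Delta K Y) :
    Z ⊆ Y := by
  obtain ⟨z, hz⟩ := hZ.2.1.nonempty
  obtain ⟨hz₁, hz₂⟩ := hZ.1 hz
  rcases Nat.lt_or_ge n 2 with hn | hn
  · rw [show n - 2 = 0 by omega] at h₁codim h₂codim
    refine absurd ?_ hne
    rw [(h₁irr.subsingleton_of_topologicalKrullDim_le_zero h₁cl h₁codim).eq_singleton_of_mem hz₁,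
      (h₂irr.subsingleton_of_topologicalKrullDim_le_zero h₂cl h₂codim).eq_singleton_of_mem hz₂]
  intro p hpZ
  by_contra hpY
  obtain ⟨s, hlen, hs, hlast⟩ := exists_ltSeries_of_projLinear_subset_cone (n - 1)
    (by rw [finrank_top, Module.finrank_fin_fun]; omega)
    (show p.rep ∈ (⊤ : Submodule K (Fin (n + 1) → K)) from Submodule.mem_top) hYcl hpY
    fun x _ => mem_cone_of_delta_subset hΔ hpZ x
  have hle := (le_topologicalKrullDim_of_ltSeries s hs hlast).trans hYcodim
  rw [hlen] at hle
  have : n - 1 ≤ n - 2 := by exact_mod_cast hle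
  omega

/-- **Trisecant-lemma paper, Lemma (intersection components).** Let `Y₁ ≠ Y₂` be irreducible
closed varieties in `ℙⁿ` of codimension at least `2`, `Y` a third irreducible closed variety of
codimension at least `2`, and `Z` an irreducible component of `Y₁ ∩ Y₂` (so `Δ(Z)` is an
intersection component of `J(Y₁,Y₂) = Δ(Y₁) ∩ Δ(Y₂)`). If `Δ(Z) ⊆ Δ(Y)` then `Z ⊆ Y`. -/
theorem intersection_component_delta_subset
    (K : Type) [Field K] [IsAlgClosed K] [CharZero K]
    (n : ℕ) (Y₁ Y₂ Y : Set (Pn K n))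
    (h₁cl : IsClosed Y₁) (h₁irr : IsIrreducible Y₁)
    (h₁codim : sdim Y₁ ≤ ((n - 2 : ℕ) : WithBot ℕ∞))
    (h₂cl : IsClosed Y₂) (h₂irr : IsIrreducible Y₂)
    (h₂codim : sdim Y₂ ≤ ((n - 2 : ℕ) : WithBot ℕ∞))
    (hne : Y₁ ≠ Y₂)
    (hYcl : IsClosed Y) (hYirr : IsIrreducible Y)
    (hYcodim : sdim Y ≤ ((n - 2 : ℕ) : WithBot ℕ∞))
    (Z : Set (Pn K n)) (hZ : IsIrredCompOf Z (Y₁ ∩ Y₂))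
    (hΔ : Delta K Z ⊆ Delta K Y) :
    Z ⊆ Y :=
  intersection_component_delta_subset_general K n Y₁ Y₂ Y h₁cl h₁irr h₁codim h₂cl h₂irr h₂codim hne
    hYcl hYcodim Z hZ hΔ
end

section
/- Over an algebraically closed field K of characteristic p > 0, the curve in ℙ³ defined by the homogeneous ideal ⟨yᵖ − z·t^{p−1}, xᵖ − y·t^{p−1}⟩ ⊆ K[x,y,z,t] has the property that the embedded tangent spaces at all its smooth points contain one and the same point at infinity (any two tangent lines are parallel in the affine chart t ≠ 0), yet the curve is not a line. In particular, the statement 'if a fixed linear space L of dimension dim(X) − 1 is contained in T_p(X) for all p in a dense open set then X is linear' fails in positive characteristic. -/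
/-!
Common framework: projective space over a field `K` with its Zariski topology,
lines, the Grassmannian `𝔾(1,n)` of lines (with the quotient Zariski topology
coming from the Stiefel-style parametrization by pairs of independent vectors),
the incidence variety `Δ(X)`, dimension of a subvariety as the topological Krull
dimension of the corresponding subspace, irreducible components, dense open
subsets, embedded projective tangent spaces, joins and (tri)secant varieties.
-/

open MvPolynomial
open scoped LinearAlgebra.Projectivization

/-!
The curve is the image of `ℙ¹` under `[t : s] ↦ [s t^(p²-1) : s^p t^(p²-p) : s^(p²) : t^(p²)]`,
which on the chart `t = 1` is `s ↦ (s, s^p, s^(p²))`. This map is Zariski continuous and onto the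
curve, so the curve is irreducible, and its proper closed subsets are finite because those of `ℙ¹`
are; this gives dimension `1`. If a homogeneous `f` vanishes on the curve, then `f ∘ param = 0`.
Differentiating in `s`, and using that in characteristic `p` only the first coordinate
`s t^(p²-1)` has a nonzero `s`-derivative, gives `(∂f/∂x) ∘ param = 0`; so `∂f/∂x` vanishes on the
curve and the point `[1 : 0 : 0 : 0]` at infinity lies in every embedded tangent space.
-/

open MvPolynomial Projectivization Set

namespace MvPolynomial

variable {R σ τ : Type*} [CommSemiring R]

lemma IsHomogeneous.eval_smul_s6 {f : MvPolynomial σ R} {d : ℕ} (hf : f.IsHomogeneous d)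
    (c : R) (w : σ → R) : eval (c • w) f = c ^ d * eval w f := by
  rw [eval_eq, eval_eq, Finset.mul_sum]
  refine Finset.sum_congr rfl fun m hm => ?_
  have hdeg : ∑ i ∈ m.support, m i = d := by
    simpa [Finsupp.weight_apply, Finsupp.sum] using hf (mem_support_iff.mp hm)
  simp only [Pi.smul_apply, smul_eq_mul, mul_pow, Finset.prod_mul_distrib,
    Finset.prod_pow_eq_pow_sum, hdeg]
  ring

lemma eq_zero_of_eval_eq_zero_of_ne_zero {A : Type*} [CommRing A] [IsDomain A] [Infinite A]
    (i : σ) {g : MvPolynomial σ A} (h : ∀ w : σ → A, w i ≠ 0 → eval w g = 0) : g = 0 := by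
  have hXg : X i * g = 0 := funext fun w => by
    by_cases hw : w i = 0 <;> simp [hw, h]
  simpa [X_ne_zero] using hXg

lemma pderiv_aeval [Fintype σ] (j : τ) (v : σ → MvPolynomial τ R) (f : MvPolynomial σ R) :
    pderiv j (aeval v f) = ∑ i, aeval v (pderiv i f) * pderiv j (v i) := by
  induction f using MvPolynomial.induction_on with
  | C a => simp
  | add f g hf hg => simp only [map_add, hf, hg, add_mul, Finset.sum_add_distrib]
  | mul_X f i hf =>
    classical
    simp only [map_mul, aeval_X, Derivation.leibniz, smul_eq_mul, map_add, hf, pderiv_X,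
      add_mul, Finset.sum_add_distrib, Finset.mul_sum]
    simp [Pi.single_apply, mul_assoc]

lemma eval_aeval (x : τ → R) (F : σ → MvPolynomial τ R) (f : MvPolynomial σ R) :
    eval x (aeval F f) = eval (fun i => eval x (F i)) f := by
  induction f using MvPolynomial.induction_on <;> simp_all

lemma isHomogeneous_X_pow_sub_X_mul_X_pow {A : Type*} [CommRing A] {p : ℕ} (hp : 1 ≤ p)
    (i j k : σ) : (X i ^ p - X j * X k ^ (p - 1) : MvPolynomial σ A).IsHomogeneous p := by
  have h := (isHomogeneous_X A j).mul (isHomogeneous_X_pow k (p - 1))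
  rw [show 1 + (p - 1) = p by omega] at h
  exact (isHomogeneous_X_pow i p).sub h

end MvPolynomial

section FiniteProperClosed

variable {X Y : Type*} [TopologicalSpace X] [TopologicalSpace Y]

lemma irreducibleSpace_of_forall_isClosed_finite [Infinite X]
    (h : ∀ Z : Set X, IsClosed Z → Z ≠ univ → Z.Finite) : IrreducibleSpace X := by
  refine (irreducibleSpace_def X).mpr ⟨univ_nonempty,
    isPreirreducible_iff_isClosed_union_isClosed.mpr fun Z₁ Z₂ h₁ h₂ hcover => ?_⟩
  by_contra! hne
  have hfin := (h Z₁ h₁ fun e => hne.1 e.ge).union (h Z₂ h₂ fun e => hne.2 e.ge)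
  exact infinite_univ (hfin.subset hcover)

lemma Function.Surjective.forall_isClosed_finite {f : X → Y} (hf : Function.Surjective f)
    (hc : Continuous f) (h : ∀ Z : Set X, IsClosed Z → Z ≠ univ → Z.Finite) :
    ∀ Z : Set Y, IsClosed Z → Z ≠ univ → Z.Finite := by
  intro Z hZ hne
  rw [← image_preimage_eq Z hf]
  refine (h _ (hZ.preimage hc) fun e => hne ?_).image f
  rw [← image_preimage_eq Z hf, e, image_univ, hf.range_eq]

lemma topologicalKrullDim_eq_one_of_forall_isClosed_finite [T1Space X] [IrreducibleSpace X]
    [Nontrivial X] (h : ∀ Z : Set X, IsClosed Z → Z ≠ univ → Z.Finite) :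
    topologicalKrullDim X = 1 := by
  refine le_antisymm (Order.krullDim_le_one_iff.mpr fun T => ?_) ?_
  · by_cases hT : (T : Set X) = univ
    · exact Or.inr fun S _ x _ => by rw [← SetLike.mem_coe, hT]; trivial
    · left
      have hsub := (h T T.isClosed hT).isDiscrete.subsingleton_of_isPreirreducible
        T.isIrreducible.isPreirreducible
      intro S hST y hy
      obtain ⟨z, hz⟩ := S.isIrreducible.nonempty
      obtain rfl := hsub hy (hST hz)
      exact hz
  · obtain ⟨x, y, hxy⟩ := exists_pair_ne X
    refine Order.one_le_krullDim_iff.mpr ⟨{x},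
      ⟨univ, IrreducibleSpace.isIrreducible_univ X, isClosed_univ⟩,
      lt_of_le_of_ne (fun _ _ => trivial) fun e => hxy ?_⟩
    have : y ∈ ({x} : TopologicalSpace.IrreducibleCloseds X) := e ▸ (trivial : y ∈ univ)
    exact (TopologicalSpace.IrreducibleCloseds.mem_singleton.mp this).symm

lemma topologicalKrullDim_range_eq_one [T1Space Y] [IrreducibleSpace X] {f : X → Y}
    (hf : Continuous f) (h : ∀ Z : Set X, IsClosed Z → Z ≠ univ → Z.Finite)
    (hnt : (range f).Nontrivial) :
    topologicalKrullDim (range f) = 1 := by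
  have hs : (rangeFactorization f).Surjective := rangeFactorization_surjective
  have := hs.irreducibleSpace hf.rangeFactorization
  have := hnt.coe_sort
  exact topologicalKrullDim_eq_one_of_forall_isClosed_finite
    (hs.forall_isClosed_finite hf.rangeFactorization h)

end FiniteProperClosed

namespace Pn

variable {K : Type} [Field K] {n : ℕ}

lemma isOpen_setOf_eval_ne_zero {f : MvPolynomial (Fin (n + 1)) K} {d : ℕ}
    (hf : f.IsHomogeneous d) : IsOpen {x : Pn K n | eval x.rep f ≠ 0} :=
  TopologicalSpace.isOpen_generateFrom_of_mem ⟨f, d, hf, rfl⟩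

lemma isClosed_setOf_eval_eq_zero {f : MvPolynomial (Fin (n + 1)) K} {d : ℕ}
    (hf : f.IsHomogeneous d) : IsClosed {x : Pn K n | eval x.rep f = 0} := by
  simpa only [compl_ofPred, not_not] using (isOpen_setOf_eval_ne_zero hf).isClosed_compl

lemma mk_eq_of_smul_rep_eq {x : Pn K n} {v : Fin (n + 1) → K} (hv : v ≠ 0) (c : K)
    (h : c • x.rep = v) : mk K v hv = x :=
  ((mk_eq_mk_iff' K _ _ hv x.rep_nonzero).mpr ⟨c, h⟩).trans x.mk_rep

lemma eval_rep_mk_eq_zero_iff {v : Fin (n + 1) → K} (hv : v ≠ 0)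
    {f : MvPolynomial (Fin (n + 1)) K} {d : ℕ} (hf : f.IsHomogeneous d) :
    eval (mk K v hv).rep f = 0 ↔ eval v f = 0 := by
  obtain ⟨a, ha⟩ := exists_smul_eq_mk_rep K v hv
  simp [← ha, Units.smul_def, hf.eval_smul_s6, a.ne_zero]

lemma rep_mk_apply_eq_zero_iff {v : Fin (n + 1) → K} (hv : v ≠ 0) (i : Fin (n + 1)) :
    (mk K v hv).rep i = 0 ↔ v i = 0 := by
  obtain ⟨a, ha⟩ := exists_smul_eq_mk_rep K v hv
  simp [← ha, Units.smul_def, a.ne_zero]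

lemma mk_mem_projLinear_iff {W : Submodule K (Fin (n + 1) → K)} {v : Fin (n + 1) → K}
    (hv : v ≠ 0) : mk K v hv ∈ projLinear K W ↔ v ∈ W := by
  obtain ⟨a, ha⟩ := exists_smul_eq_mk_rep K v hv
  change (mk K v hv).rep ∈ W ↔ v ∈ W
  rw [← ha]
  exact W.smul_mem_iff' a

lemma exists_basicOpen_subset {U : Set (Pn K n)} (hU : IsOpen U) {x : Pn K n} (hx : x ∈ U) :
    ∃ (f : MvPolynomial (Fin (n + 1)) K) (d : ℕ), f.IsHomogeneous d ∧ eval x.rep f ≠ 0 ∧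
      {y : Pn K n | eval y.rep f ≠ 0} ⊆ U := by
  induction hU with
  | basic V hV =>
    obtain ⟨f, d, hf, rfl⟩ := hV
    exact ⟨f, d, hf, hx, subset_rfl⟩
  | univ => exact ⟨1, 0, isHomogeneous_one _ _, by simp, subset_univ _⟩
  | inter U V _ _ ihU ihV =>
    obtain ⟨f, d, hf, hfx, hfU⟩ := ihU hx.1
    obtain ⟨g, e, hg, hgx, hgV⟩ := ihV hx.2
    refine ⟨f * g, d + e, hf.mul hg, by simp [hfx, hgx], fun y hy => ?_⟩
    simp only [mem_ofPred_eq, map_mul, ne_eq, mul_eq_zero, not_or] at hy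
    exact ⟨hfU hy.1, hgV hy.2⟩
  | sUnion S _ ih =>
    obtain ⟨V, hVS, hxV⟩ := hx
    obtain ⟨f, d, hf, hfx, hfV⟩ := ih V hVS hxV
    exact ⟨f, d, hf, hfx, hfV.trans (subset_sUnion_of_mem hVS)⟩

instance : T1Space (Pn K n) where
  t1 a := by
    have ha : {a} = ⋂ (i) (j),
        {y : Pn K n | eval y.rep (C (a.rep j) * X i - C (a.rep i) * X j) = 0} := by
      ext y
      simp only [mem_singleton_iff, mem_iInter, mem_ofPred_eq, map_sub, map_mul, eval_C, eval_X,
        sub_eq_zero]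
      refine ⟨by rintro rfl i j; ring, fun h => ?_⟩
      obtain ⟨k, hk⟩ : ∃ k, a.rep k ≠ 0 := Function.ne_iff.mp a.rep_nonzero
      rw [← y.mk_rep]
      refine mk_eq_of_smul_rep_eq _ (y.rep k / a.rep k) (funext fun i => ?_)
      simp only [Pi.smul_apply, smul_eq_mul]
      field_simp
      linear_combination -h i k
    rw [ha]
    exact isClosed_iInter fun i => isClosed_iInter fun j => isClosed_setOf_eval_eq_zero
      (((isHomogeneous_X K i).C_mul _).sub ((isHomogeneous_X K j).C_mul _))

noncomputable def polyMap {m : ℕ} (F : Fin (m + 1) → MvPolynomial (Fin (n + 1)) K)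
    (hF : ∀ v : Fin (n + 1) → K, v ≠ 0 → (fun i => eval v (F i)) ≠ 0) (x : Pn K n) : Pn K m :=
  mk K (fun i => eval x.rep (F i)) (hF _ x.rep_nonzero)

lemma continuous_polyMap {m e : ℕ} {F : Fin (m + 1) → MvPolynomial (Fin (n + 1)) K}
    (hF : ∀ v : Fin (n + 1) → K, v ≠ 0 → (fun i => eval v (F i)) ≠ 0)
    (hFe : ∀ i, (F i).IsHomogeneous e) : Continuous (polyMap F hF) := by
  refine continuous_generateFrom_iff.mpr ?_
  rintro _ ⟨f, d, hf, rfl⟩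
  have hpre : polyMap F hF ⁻¹' {y | eval y.rep f ≠ 0} = {x | eval x.rep (aeval F f) ≠ 0} := by
    ext x
    simp only [mem_preimage, mem_ofPred_eq, polyMap, ne_eq, eval_rep_mk_eq_zero_iff _ hf,
      eval_aeval]
  rw [hpre]
  exact isOpen_setOf_eval_ne_zero (hf.aeval F hFe)

lemma polyMap_mk {m e : ℕ} {F : Fin (m + 1) → MvPolynomial (Fin (n + 1)) K}
    (hF : ∀ v : Fin (n + 1) → K, v ≠ 0 → (fun i => eval v (F i)) ≠ 0)
    (hFe : ∀ i, (F i).IsHomogeneous e) {v : Fin (n + 1) → K} (hv : v ≠ 0) :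
    polyMap F hF (mk K v hv) = mk K (fun i => eval v (F i)) (hF v hv) := by
  obtain ⟨a, ha⟩ := exists_smul_eq_mk_rep K v hv
  refine (mk_eq_mk_iff' K _ _ _ _).mpr ⟨(a : K) ^ e, funext fun i => ?_⟩
  simp [← ha, Units.smul_def, (hFe i).eval_smul_s6]

lemma mk_single_mem_tangentSpace_iff (S : Set (Pn K n)) (x : Pn K n) (i : Fin (n + 1)) :
    mk K (Pi.single i 1 : Fin (n + 1) → K) (by simp) ∈ tangentSpace K S x ↔
      ∀ (f : MvPolynomial (Fin (n + 1)) K) (d : ℕ), f.IsHomogeneous d →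
        (∀ y ∈ S, eval y.rep f = 0) → eval x.rep (pderiv i f) = 0 := by
  obtain ⟨a, ha⟩ := exists_smul_eq_mk_rep K (Pi.single i 1 : Fin (n + 1) → K) (by simp)
  simp [tangentSpace, ← ha, Units.smul_def, Pi.single_apply, a.ne_zero]

lemma not_isLine_of_linearIndependent {S : Set (Pn K n)} {v : Fin 3 → Fin (n + 1) → K}
    (hv : LinearIndependent K v) (hS : ∀ i, mk K (v i) (hv.ne_zero i) ∈ S) : ¬ IsLine K S := by
  rintro ⟨W, hW, rfl⟩
  have hle : Submodule.span K (range v) ≤ W :=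
    Submodule.span_le.mpr (range_subset_iff.mpr fun i => (mk_mem_projLinear_iff _).mp (hS i))
  have := Submodule.finrank_mono hle
  rw [finrank_span_eq_card hv, hW] at this
  simp at this

lemma eq_smul_cons_one_div {w : Fin 2 → K} (hw : w 0 ≠ 0) : w = w 0 • ![1, w 1 / w 0] := by
  ext i
  fin_cases i <;> simp [mul_div_cancel₀ _ hw]

section ProjectiveLine

variable [Infinite K]

lemma finite_setOf_eval_cons_one_eq_zero {g : MvPolynomial (Fin 2) K} {m : ℕ}
    (hg : g.IsHomogeneous m) (hg0 : g ≠ 0) : {s : K | eval ![1, s] g = 0}.Finite := by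
  set q : Polynomial K := aeval ![1, Polynomial.X] g
  have hq : ∀ s, q.eval s = eval ![1, s] g := fun s => by
    rw [← Polynomial.coe_aeval_eq_eval, comp_aeval_apply, ← coe_aeval_eq_eval]
    have hpt : (fun i => Polynomial.aeval s (![1, Polynomial.X] i : Polynomial K)) = ![1, s] := by
      ext i
      fin_cases i <;> simp
    rw [hpt]
    rfl
  have hq0 : q ≠ 0 := by
    intro h
    refine hg0 (eq_zero_of_eval_eq_zero_of_ne_zero 0 fun w hw => ?_)
    rw [eq_smul_cons_one_div hw, hg.eval_smul_s6, ← hq, h, Polynomial.eval_zero, mul_zero]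
  simpa only [Polynomial.IsRoot, hq] using Polynomial.finite_setOfPred_isRoot hq0

lemma finite_setOf_eval_eq_zero {g : MvPolynomial (Fin 2) K} {m : ℕ} (hg : g.IsHomogeneous m)
    (hg0 : g ≠ 0) : {x : Pn K 1 | eval x.rep g = 0}.Finite := by
  refine ((finite_singleton (mk K ![0, 1] (by simp))).union
    ((finite_setOf_eval_cons_one_eq_zero hg hg0).image fun s => mk K ![1, s] (by simp))).subset ?_
  intro x hx
  by_cases h0 : x.rep 0 = 0
  · have h1 : x.rep 1 ≠ 0 := fun h1 => x.rep_nonzero (by ext i; fin_cases i <;> simp [h0, h1])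
    refine Or.inl (mk_eq_of_smul_rep_eq _ (x.rep 1)⁻¹ ?_).symm
    ext i
    fin_cases i <;> simp [h0, h1]
  · refine Or.inr ⟨x.rep 1 / x.rep 0, ?_, mk_eq_of_smul_rep_eq _ (x.rep 0)⁻¹ ?_⟩
    · have hx' : eval x.rep g = 0 := hx
      rw [eq_smul_cons_one_div h0, hg.eval_smul_s6] at hx'
      simpa [h0] using hx'
    · conv_lhs => rw [eq_smul_cons_one_div h0]
      simp [h0]

instance : Infinite (Pn K 1) :=
  Infinite.of_injective (fun s : K => mk K ![1, s] (by simp)) fun s t h => by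
    obtain ⟨a, ha⟩ := (mk_eq_mk_iff' K _ _ _ _).mp h
    have h0 := congrFun ha 0
    have h1 := congrFun ha 1
    simp_all

lemma finite_of_isClosed_of_ne_univ (Z : Set (Pn K 1)) (hZ : IsClosed Z) (hne : Z ≠ univ) :
    Z.Finite := by
  obtain ⟨x, hx⟩ := (ne_univ_iff_exists_notMem Z).mp hne
  obtain ⟨g, m, hg, hgx, hgZ⟩ := exists_basicOpen_subset hZ.isOpen_compl hx
  refine (finite_setOf_eval_eq_zero hg (by rintro rfl; simp at hgx)).subset fun y hy => ?_
  by_contra hyZ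
  exact hgZ hyZ hy

instance : IrreducibleSpace (Pn K 1) :=
  irreducibleSpace_of_forall_isClosed_finite finite_of_isClosed_of_ne_univ

end ProjectiveLine

end Pn

namespace FrobeniusCurve

variable {K : Type} [Field K] {p : ℕ}

def curve (K : Type) [Field K] (p : ℕ) : Set (Pn K 3) :=
  {x | eval x.rep ((X 1 : MvPolynomial (Fin 4) K) ^ p - X 2 * X 3 ^ (p - 1)) = 0 ∧
    eval x.rep ((X 0 : MvPolynomial (Fin 4) K) ^ p - X 1 * X 3 ^ (p - 1)) = 0}

lemma isClosed_curve (hp : 1 ≤ p) : IsClosed (curve K p) :=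
  (Pn.isClosed_setOf_eval_eq_zero (isHomogeneous_X_pow_sub_X_mul_X_pow hp 1 2 3)).inter
    (Pn.isClosed_setOf_eval_eq_zero (isHomogeneous_X_pow_sub_X_mul_X_pow hp 0 1 3))

lemma mk_mem_curve_iff (hp : 1 ≤ p) {v : Fin 4 → K} (hv : v ≠ 0) :
    mk K v hv ∈ curve K p ↔ v 1 ^ p = v 2 * v 3 ^ (p - 1) ∧ v 0 ^ p = v 1 * v 3 ^ (p - 1) := by
  simp only [curve, mem_ofPred_eq,
    Pn.eval_rep_mk_eq_zero_iff hv (isHomogeneous_X_pow_sub_X_mul_X_pow hp _ _ _)]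
  simp [sub_eq_zero]

noncomputable def param (p : ℕ) : Fin 4 → MvPolynomial (Fin 2) K :=
  ![X 1 * X 0 ^ (p ^ 2 - 1), X 1 ^ p * X 0 ^ (p ^ 2 - p), X 1 ^ p ^ 2, X 0 ^ p ^ 2]

lemma eval_param (w : Fin 2 → K) : (fun i => eval w (param p i)) =
    ![w 1 * w 0 ^ (p ^ 2 - 1), w 1 ^ p * w 0 ^ (p ^ 2 - p), w 1 ^ p ^ 2, w 0 ^ p ^ 2] := by
  ext i
  fin_cases i <;> simp [param]

lemma isHomogeneous_param (hp : 1 ≤ p) (i : Fin 4) :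
    (param (K := K) p i).IsHomogeneous (p ^ 2) := by
  have h1 : 1 ≤ p ^ 2 := Nat.one_le_pow _ _ hp
  have h2 : p ≤ p ^ 2 := Nat.le_self_pow two_ne_zero p
  fin_cases i
  · have h := (isHomogeneous_X K (1 : Fin 2)).mul (isHomogeneous_X_pow (0 : Fin 2) (p ^ 2 - 1))
    rw [show 1 + (p ^ 2 - 1) = p ^ 2 by omega] at h
    simpa [param] using h
  · have h := (isHomogeneous_X_pow (R := K) (1 : Fin 2) p).mul
      (isHomogeneous_X_pow (0 : Fin 2) (p ^ 2 - p))
    rw [show p + (p ^ 2 - p) = p ^ 2 by omega] at h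
    simpa [param] using h
  · simpa [param] using isHomogeneous_X_pow (R := K) (1 : Fin 2) (p ^ 2)
  · simpa [param] using isHomogeneous_X_pow (R := K) (0 : Fin 2) (p ^ 2)

lemma eval_param_ne_zero (w : Fin 2 → K) (hw : w ≠ 0) : (fun i => eval w (param p i)) ≠ 0 := by
  rw [eval_param]
  intro h
  have h2 := congrFun h 2
  have h3 := congrFun h 3
  simp only [Matrix.cons_val, Pi.zero_apply, pow_eq_zero_iff', ne_eq] at h2 h3
  exact hw (by ext i; fin_cases i <;> simp [h2.1, h3.1])

noncomputable def paramMap (p : ℕ) : Pn K 1 → Pn K 3 :=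
  Pn.polyMap (param p) eval_param_ne_zero

lemma continuous_paramMap (hp : 1 ≤ p) : Continuous (paramMap (K := K) p) :=
  Pn.continuous_polyMap _ (isHomogeneous_param hp)

lemma mk_eval_param_mem_curve (hp : 1 ≤ p) (w : Fin 2 → K) (hw : w ≠ 0) :
    mk K _ (eval_param_ne_zero (p := p) w hw) ∈ curve K p := by
  have h1 : 1 ≤ p ^ 2 := Nat.one_le_pow _ _ hp
  have h2 : p ≤ p ^ 2 := Nat.le_self_pow two_ne_zero p
  have hA : (p ^ 2 - p) * p = p ^ 2 * (p - 1) := by zify [h1, h2, hp]; ring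
  have hB : (p ^ 2 - 1) * p = (p ^ 2 - p) + p ^ 2 * (p - 1) := by zify [h1, h2, hp]; ring
  rw [mk_mem_curve_iff hp]
  simp only [param, Matrix.cons_val, map_mul, map_pow, eval_X]
  constructor
  · rw [mul_pow, ← pow_mul, ← pow_mul, ← pow_mul, hA, ← sq]
  · rw [mul_pow, ← pow_mul, ← pow_mul, hB, pow_add]
    ring

lemma paramMap_mem_curve (hp : 1 ≤ p) (x : Pn K 1) : paramMap p x ∈ curve K p :=
  mk_eval_param_mem_curve hp x.rep x.rep_nonzero

lemma curve_subset_range_paramMap (hp : 2 ≤ p) : curve K p ⊆ range (paramMap p) := by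
  intro x hx
  have hp0 : p - 1 ≠ 0 := by omega
  by_cases h3 : x.rep 3 = 0
  · rw [← x.mk_rep, mk_mem_curve_iff (by omega)] at hx
    simp only [h3, zero_pow hp0, mul_zero, pow_eq_zero_iff', ne_eq] at hx
    have h1 : x.rep 1 = 0 := hx.1.1
    have h0 : x.rep 0 = 0 := hx.2.1
    have hpp : 2 * p ≤ p ^ 2 := by rw [sq]; exact Nat.mul_le_mul_right p hp
    have h2 : x.rep 2 ≠ 0 := fun h2 => x.rep_nonzero (by ext i; fin_cases i <;> simp [*])
    refine ⟨mk K ![0, 1] (by simp), ?_⟩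
    rw [paramMap, Pn.polyMap_mk _ (isHomogeneous_param (by omega))]
    refine Pn.mk_eq_of_smul_rep_eq _ (x.rep 2)⁻¹ ?_
    rw [eval_param]
    ext i
    fin_cases i <;> simp [h0, h1, h2, h3, zero_pow (show p ^ 2 - 1 ≠ 0 by omega),
      zero_pow (show p ^ 2 - p ≠ 0 by omega), zero_pow (show p ^ 2 ≠ 0 by omega)]
  · set u := (x.rep 3)⁻¹ • x.rep
    have hu : u ≠ 0 := smul_ne_zero (inv_ne_zero h3) x.rep_nonzero
    have hux : mk K u hu = x := Pn.mk_eq_of_smul_rep_eq hu _ rfl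
    have hu3 : u 3 = 1 := by simp [u, h3]
    rw [← hux, mk_mem_curve_iff (by omega), hu3] at hx
    simp only [one_pow, mul_one] at hx
    refine ⟨mk K ![1, u 0] (by simp), ?_⟩
    rw [← hux, paramMap, Pn.polyMap_mk _ (isHomogeneous_param (by omega))]
    congr 1
    rw [eval_param]
    ext i
    fin_cases i <;> simp [hx, hu3, sq, pow_mul]

lemma range_paramMap (hp : 2 ≤ p) : range (paramMap p) = curve K p :=
  (range_subset_iff.mpr (paramMap_mem_curve (by omega))).antisymm
    (curve_subset_range_paramMap hp)

lemma isIrreducible_curve [Infinite K] (hp : 2 ≤ p) : IsIrreducible (curve K p) := by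
  rw [← range_paramMap hp, ← image_univ]
  exact (IrreducibleSpace.isIrreducible_univ _).image _
    (continuous_paramMap (by omega)).continuousOn

lemma sdim_curve [Infinite K] (hp : 2 ≤ p) : sdim (curve K p) = 1 := by
  have hp1 : 1 ≤ p := by omega
  rw [sdim, ← range_paramMap hp]
  refine topologicalKrullDim_range_eq_one (continuous_paramMap hp1)
    Pn.finite_of_isClosed_of_ne_univ ?_
  rw [range_paramMap hp]
  refine ⟨mk K (Pi.single 2 1) (by simp), ?_, mk K (Pi.single 3 1) (by simp), ?_, ?_⟩
  · simp [mk_mem_curve_iff hp1, show p ≠ 0 by omega, show p - 1 ≠ 0 by omega]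
  · simp [mk_mem_curve_iff hp1, show p ≠ 0 by omega]
  · rw [Ne, mk_eq_mk_iff']
    rintro ⟨a, ha⟩
    simpa using congrFun ha 2

lemma not_isLine_curve (hp : 2 ≤ p) : ¬ IsLine K (curve K p) := by
  have hli : LinearIndependent K ![Pi.single 2 1, Pi.single 3 1, (1 : Fin 4 → K)] := by
    rw [Fintype.linearIndependent_iff]
    intro g hg
    have h0 := congrFun hg 0
    have h2 := congrFun hg 2
    have h3 := congrFun hg 3
    simp [Fin.sum_univ_three] at h0 h2 h3
    have hg0 : g 0 = 0 := by linear_combination h2 - h0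
    have hg1 : g 1 = 0 := by linear_combination h3 - h0
    intro i
    fin_cases i <;> simp [hg0, hg1, h0]
  refine Pn.not_isLine_of_linearIndependent hli fun i => ?_
  fin_cases i <;> simp [mk_mem_curve_iff (show 1 ≤ p by omega), show p ≠ 0 by omega,
    show p - 1 ≠ 0 by omega]

lemma aeval_param_eq_zero [Infinite K] (hp : 1 ≤ p) {f : MvPolynomial (Fin 4) K} {d : ℕ}
    (hf : f.IsHomogeneous d) (hvan : ∀ y ∈ curve K p, eval y.rep f = 0) :
    aeval (param (K := K) p) f = 0 := by
  refine eq_zero_of_eval_eq_zero_of_ne_zero 0 fun w hw => ?_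
  have hw0 : w ≠ 0 := fun h => hw (by simp [h])
  rw [eval_aeval, ← Pn.eval_rep_mk_eq_zero_iff (eval_param_ne_zero w hw0) hf]
  exact hvan _ (mk_eval_param_mem_curve hp w hw0)

lemma pderiv_one_param [CharP K p] (i : Fin 4) :
    pderiv 1 (param (K := K) p i) = ![X 0 ^ (p ^ 2 - 1), 0, 0, 0] i := by
  fin_cases i <;> simp [param, pderiv_X, CharP.cast_eq_zero]

lemma aeval_param_pderiv_zero_eq_zero [Infinite K] [CharP K p] (hp : 1 ≤ p)
    {f : MvPolynomial (Fin 4) K} {d : ℕ} (hf : f.IsHomogeneous d)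
    (hvan : ∀ y ∈ curve K p, eval y.rep f = 0) : aeval (param (K := K) p) (pderiv 0 f) = 0 := by
  have h := congrArg (pderiv 1) (aeval_param_eq_zero hp hf hvan)
  rw [pderiv_aeval, map_zero, Fin.sum_univ_four] at h
  simp only [pderiv_one_param] at h
  simpa [X_ne_zero] using h

lemma eval_pderiv_zero_eq_zero [Infinite K] [CharP K p] (hp : 2 ≤ p)
    {f : MvPolynomial (Fin 4) K} {d : ℕ} (hf : f.IsHomogeneous d)
    (hvan : ∀ y ∈ curve K p, eval y.rep f = 0) {x : Pn K 3} (hx : x ∈ curve K p) :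
    eval x.rep (pderiv 0 f) = 0 := by
  obtain ⟨y, rfl⟩ := curve_subset_range_paramMap hp hx
  rw [paramMap, Pn.polyMap, Pn.eval_rep_mk_eq_zero_iff _ hf.pderiv, ← eval_aeval,
    aeval_param_pderiv_zero_eq_zero (by omega) hf hvan, map_zero]

end FrobeniusCurve

/-- **Trisecant-lemma paper, counterexample in characteristic `p > 0`.** Over an algebraically
closed field `K` of characteristic `p > 0`, the curve `C ⊆ ℙ³` defined by the homogeneous
ideal `⟨yᵖ - z·t^(p-1), xᵖ - y·t^(p-1)⟩` is an irreducible curve (closed, irreducible, of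
dimension `1`), there is a single point `q` at infinity (i.e. on the plane `t = 0`) contained
in the embedded tangent space at every smooth point of `C` (smooth points of the curve being
the points where the embedded tangent space is a line), and yet `C` is not a line. -/
theorem charP_tangent_counterexample
    (K : Type) [Field K] [IsAlgClosed K] (p : ℕ) [Fact p.Prime] [CharP K p]
    (C : Set (Pn K 3))
    (hC : C = {x : Pn K 3 |
      MvPolynomial.eval x.rep
        ((MvPolynomial.X 1 : MvPolynomial (Fin 4) K) ^ p -
          MvPolynomial.X 2 * MvPolynomial.X 3 ^ (p - 1)) = 0 ∧
      MvPolynomial.eval x.rep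
        ((MvPolynomial.X 0 : MvPolynomial (Fin 4) K) ^ p -
          MvPolynomial.X 1 * MvPolynomial.X 3 ^ (p - 1)) = 0}) :
    IsClosed C ∧ IsIrreducible C ∧ sdim C = (1 : WithBot ℕ∞) ∧
      (∃ q : Pn K 3, q.rep 3 = 0 ∧
        ∀ x ∈ C, ∀ l : Set (Pn K 3), IsLine K l → tangentSpace K C x = l → q ∈ l) ∧
      ¬ IsLine K C := by
  have hp : 2 ≤ p := (Fact.out : p.Prime).two_le
  subst hC
  refine ⟨FrobeniusCurve.isClosed_curve (by omega), FrobeniusCurve.isIrreducible_curve hp,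
    FrobeniusCurve.sdim_curve hp,
    ⟨mk K (Pi.single 0 1) (by simp), by simp [Pn.rep_mk_apply_eq_zero_iff], ?_⟩,
    FrobeniusCurve.not_isLine_curve hp⟩
  rintro x hx l - rfl
  exact (Pn.mk_single_mem_tangentSpace_iff _ x 0).mpr fun f d hf hvan =>
    FrobeniusCurve.eval_pderiv_zero_eq_zero hp hf hvan hx
end
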